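/- arXiv:0805.3813 — 5 statements merged into one kernel-verified Lean document; each statement's English description precedes it below -/
import Mathlib

section
/- Let X be a uniformly convex Banach space, G a group acting on X by affine isometries, and K ⊆ G a finite symmetric generating set containing the identity. Define d_K(x) = max_{k∈K} ‖k·x − x‖ and assume d_K is proper, i.e., d_K(x) → ∞ as ‖x‖ → ∞ (for every R there is S such that ‖x‖ ≥ S implies d_K(x) ≥ R). Then the set M of points attaining the infimum m = inf_x d_K(x) is nonempty, closed, convex, and bounded. -/
/-! The function `d_K` is convex (each `x ↦ ρ k x - x` is affine) and continuous (each `ρ k` is an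
isometry), and properness makes its sublevel sets bounded. Hence `M = {d_K ≤ m}` is closed, convex
and bounded, and it is the intersection of the nested nonempty closed convex bounded sets
`{d_K ≤ m + 1/(n+1)}`. In a uniformly convex Banach space such an intersection is nonempty: if
`x n` is a nearly norm-minimal point of the `n`-th set, the midpoints of `x a` and `x b` lie in the
sets as well, so their norms cannot drop below the limiting minimal norm, and uniform convexity
forces `‖x a - x b‖ → 0`; the limit of the Cauchy sequence `x n` lies in every set. -/

open Bornology Filter Metric Set Topology

section UniformConvexSpace

variable {E : Type*} [NormedAddCommGroup E] [NormedSpace ℝ E] [UniformConvexSpace E]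

theorem exists_forall_norm_add_le_mul_two_sub {ε R : ℝ} (hε : 0 < ε) (hR : 0 < R) :
    ∃ δ, 0 < δ ∧ ∀ ⦃r : ℝ⦄, r ≤ R → ∀ ⦃x y : E⦄, ‖x‖ ≤ r → ‖y‖ ≤ r → ε ≤ ‖x - y‖ →
      ‖x + y‖ ≤ r * (2 - δ) := by
  obtain ⟨δ, hδ, h⟩ := exists_forall_closed_ball_dist_add_le_two_sub E (div_pos hε hR)
  refine ⟨δ, hδ, fun r hrR x y hx hy hxy => ?_⟩
  have hr : 0 < r := by
    by_contra! hr
    linarith [norm_sub_le x y]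
  have hscale : ∀ z : E, ‖r⁻¹ • z‖ = ‖z‖ / r := fun z => by
    rw [norm_smul_of_nonneg (inv_nonneg.2 hr.le), inv_mul_eq_div]
  have hdist : ε / R ≤ ‖r⁻¹ • x - r⁻¹ • y‖ := by
    rw [← smul_sub, hscale]
    calc ε / R ≤ ε / r := by gcongr
      _ ≤ ‖x - y‖ / r := by gcongr
  have hsum := h (x := r⁻¹ • x) (y := r⁻¹ • y)
    (by rw [hscale]; exact div_le_one_of_le₀ hx hr.le)
    (by rw [hscale]; exact div_le_one_of_le₀ hy hr.le) hdist
  rw [← smul_add, hscale, div_le_iff₀ hr] at hsum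
  linarith

theorem cauchySeq_of_tendsto_norm_of_le_norm_add {x : ℕ → E} {L : ℝ}
    (hnorm : Tendsto (fun n => ‖x n‖) atTop (𝓝 L))
    (hadd : ∀ η > 0, ∃ N, ∀ a ≥ N, ∀ b ≥ N, 2 * (L - η) ≤ ‖x a + x b‖) : CauchySeq x := by
  have hL : 0 ≤ L := ge_of_tendsto' hnorm fun n => norm_nonneg _
  rw [Metric.cauchySeq_iff]
  intro ε hε
  obtain ⟨δ, hδ, huc⟩ := exists_forall_norm_add_le_mul_two_sub (E := E) hε (by linarith : 0 < L + 1)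
  -- If `ε ≤ ‖x a - x b‖`, the two bounds on `‖x a + x b‖` give `(L + η) * δ ≤ 4 * η`, whereas
  -- `ε ≤ 2 * (L + η)`; so `η < ε * δ / 8` is contradictory.
  set η := min 1 (ε * δ / 16)
  have hη : 0 < η := by positivity
  obtain ⟨N₁, hN₁⟩ := eventually_atTop.1 (hnorm.eventually (gt_mem_nhds (by linarith : L < L + η)))
  obtain ⟨N₂, hN₂⟩ := hadd η hη
  refine ⟨max N₁ N₂, fun a ha b hb => ?_⟩
  rw [ge_iff_le, max_le_iff] at ha hb
  by_contra! hab
  rw [dist_eq_norm] at hab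
  have hxa := (hN₁ a ha.1).le
  have hxb := (hN₁ b hb.1).le
  have hupper := huc (add_le_add_right (min_le_left _ _) L) hxa hxb hab
  have hlower := hN₂ a ha.2 b hb.2
  have hdiam : ε * δ ≤ 2 * (L + η) * δ := by
    gcongr
    linarith [norm_sub_le (x a) (x b)]
  nlinarith [min_le_right 1 (ε * δ / 16)]

theorem nonempty_iInter_of_antitone_convex_isClosed [CompleteSpace E] {C : ℕ → Set E}
    (hanti : Antitone C) (hne : ∀ n, (C n).Nonempty) (hconv : ∀ n, Convex ℝ (C n))
    (hclosed : ∀ n, IsClosed (C n)) (hbdd : IsBounded (C 0)) : (⋂ n, C n).Nonempty := by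
  set e : ℕ → ℝ := fun n => infDist 0 (C n)
  have he_mono : Monotone e := fun a b hab => infDist_le_infDist_of_subset (hanti hab) (hne b)
  obtain ⟨B, hB⟩ := hbdd.subset_closedBall 0
  have he_bdd : BddAbove (range e) := by
    refine ⟨B, forall_mem_range.2 fun n => ?_⟩
    obtain ⟨y, hy⟩ := hne n
    exact (infDist_le_dist_of_mem hy).trans (by simpa [dist_comm] using hB (hanti n.zero_le hy))
  set L := ⨆ n, e n
  have he : Tendsto e atTop (𝓝 L) := tendsto_atTop_ciSup he_mono he_bdd
  have hnear : ∀ n : ℕ, ∃ y ∈ C n, ‖y‖ < e n + 1 / (n + 1) := fun n => by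
    simpa using (infDist_lt_iff (hne n)).1 (lt_add_of_pos_right (e n) Nat.one_div_pos_of_nat)
  choose x hxC hxe using hnear
  have hex : ∀ n, e n ≤ ‖x n‖ := fun n => by simpa using infDist_le_dist_of_mem (x := 0) (hxC n)
  have hnorm : Tendsto (fun n => ‖x n‖) atTop (𝓝 L) := by
    refine tendsto_of_tendsto_of_tendsto_of_le_of_le he ?_ hex fun n => (hxe n).le
    simpa using he.add tendsto_one_div_add_atTop_nhds_zero_nat
  have hadd : ∀ η > 0, ∃ N, ∀ a ≥ N, ∀ b ≥ N, 2 * (L - η) ≤ ‖x a + x b‖ := by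
    intro η hη
    obtain ⟨N, hN⟩ := (he.eventually (lt_mem_nhds (by linarith : L - η < L))).exists
    refine ⟨N, fun a ha b hb => ?_⟩
    have hmid : (1 / 2 : ℝ) • x a + (1 / 2 : ℝ) • x b ∈ C N :=
      hconv N (hanti ha (hxC a)) (hanti hb (hxC b)) (by norm_num) (by norm_num) (by norm_num)
    have := infDist_le_dist_of_mem (x := 0) hmid
    rw [dist_zero_left, ← smul_add, norm_smul_of_nonneg (by norm_num)] at this
    linarith
  obtain ⟨p, hp⟩ := cauchySeq_tendsto_of_complete (cauchySeq_of_tendsto_norm_of_le_norm_add hnorm hadd)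
  exact ⟨p, mem_iInter.2 fun n =>
    (hclosed n).mem_of_tendsto hp (eventually_atTop.2 ⟨n, fun k hk => hanti hk (hxC k)⟩)⟩

theorem ConvexOn.exists_apply_eq_iInf [CompleteSpace E] {f : E → ℝ} (hf : ConvexOn ℝ univ f)
    (hcont : Continuous f) (hbelow : BddBelow (range f)) (hsub : ∀ c, IsBounded {x | f x ≤ c}) :
    ∃ x, f x = ⨅ y, f y := by
  set m := ⨅ y, f y
  set C : ℕ → Set E := fun n => {x | f x ≤ m + 1 / (n + 1)}
  have hne : ∀ n, (C n).Nonempty := fun n =>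
    let ⟨y, hy⟩ := exists_lt_of_ciInf_lt (lt_add_of_pos_right m Nat.one_div_pos_of_nat)
    ⟨y, hy.le⟩
  have hanti : Antitone C := fun a b hab y hy =>
    hy.trans (add_le_add_right (Nat.one_div_le_one_div hab) m)
  obtain ⟨p, hp⟩ := nonempty_iInter_of_antitone_convex_isClosed hanti hne
    (fun n => by simpa only [mem_univ, true_and] using hf.convex_le (m + 1 / (n + 1)))
    (fun n => isClosed_le hcont continuous_const) (hsub _)
  have hlim : Tendsto (fun n : ℕ => m + 1 / (n + 1)) atTop (𝓝 m) := by
    simpa using tendsto_const_nhds (x := m).add tendsto_one_div_add_atTop_nhds_zero_nat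
  exact ⟨p, le_antisymm (ge_of_tendsto' hlim (mem_iInter.1 hp)) (ciInf_le hbelow p)⟩

end UniformConvexSpace

section Displacement

variable {X ι : Type*} [NormedAddCommGroup X] (ρ : ι → X → X) (K : Finset ι) (hK : K.Nonempty)

noncomputable def displacement (x : X) : ℝ :=
  K.sup' hK fun k => ‖ρ k x - x‖

theorem displacement_nonneg (x : X) : 0 ≤ displacement ρ K hK x := by
  obtain ⟨k, hk⟩ := hK
  exact Finset.le_sup'_of_le _ hk (norm_nonneg _)

theorem continuous_displacement (hiso : ∀ i x y, ‖ρ i x - ρ i y‖ = ‖x - y‖) :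
    Continuous (displacement ρ K hK) := by
  refine Continuous.finset_sup'_apply hK fun k _ => ?_
  have hρ : Isometry (ρ k) := Isometry.of_dist_eq fun x y => by rw [dist_eq_norm, dist_eq_norm, hiso]
  exact (hρ.continuous.sub continuous_id).norm

theorem convexOn_displacement [NormedSpace ℝ X]
    (haff : ∀ i (t : ℝ) x y, 0 ≤ t → t ≤ 1 →
      ρ i (t • x + (1 - t) • y) = t • ρ i x + (1 - t) • ρ i y) :
    ConvexOn ℝ univ (displacement ρ K hK) := by
  refine ⟨convex_univ, fun x _ y _ a b ha hb hab => Finset.sup'_le _ _ fun k hk => ?_⟩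
  obtain rfl : b = 1 - a := by linarith
  calc ‖ρ k (a • x + (1 - a) • y) - (a • x + (1 - a) • y)‖
      = ‖a • (ρ k x - x) + (1 - a) • (ρ k y - y)‖ := by
        rw [haff k a x y ha (by linarith)]
        congr 1
        module
    _ ≤ a * ‖ρ k x - x‖ + (1 - a) * ‖ρ k y - y‖ := by
        refine (norm_add_le _ _).trans_eq ?_
        rw [norm_smul_of_nonneg ha, norm_smul_of_nonneg hb]
    _ ≤ a • displacement ρ K hK x + (1 - a) • displacement ρ K hK y := by
        simp only [smul_eq_mul]
        gcongr
        exacts [Finset.le_sup' (fun k => ‖ρ k x - x‖) hk, Finset.le_sup' (fun k => ‖ρ k y - y‖) hk]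

end Displacement

theorem stmt2_general
    {X : Type*} [NormedAddCommGroup X] [NormedSpace ℝ X]
    [UniformConvexSpace X] [CompleteSpace X]
    {G : Type*} [Group G] (ρ : G → X → X)
    (hiso : ∀ g x y, ‖ρ g x - ρ g y‖ = ‖x - y‖)
    (haff : ∀ g (t : ℝ) x y, 0 ≤ t → t ≤ 1 →
      ρ g (t • x + (1 - t) • y) = t • ρ g x + (1 - t) • ρ g y)
    (K : Finset G) (h1K : (1 : G) ∈ K)
    (dK : X → ℝ)
    (hdK : ∀ x, dK x = K.sup' ⟨1, h1K⟩ (fun k => ‖ρ k x - x‖))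
    (hproper : ∀ R : ℝ, ∃ S : ℝ, ∀ x : X, S ≤ ‖x‖ → R ≤ dK x)
    (m : ℝ) (hm : m = ⨅ x : X, dK x) :
    {x : X | dK x = m}.Nonempty ∧ IsClosed {x : X | dK x = m} ∧
    Convex ℝ {x : X | dK x = m} ∧ IsBounded {x : X | dK x = m} := by
  obtain rfl : dK = displacement ρ K ⟨1, h1K⟩ := funext hdK
  have hcont := continuous_displacement ρ K ⟨1, h1K⟩ hiso
  have hconv := convexOn_displacement ρ K ⟨1, h1K⟩ haff
  have hbelow : BddBelow (range (displacement ρ K ⟨1, h1K⟩)) :=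
    ⟨0, forall_mem_range.2 (displacement_nonneg ρ K ⟨1, h1K⟩)⟩
  have hsub : ∀ c, IsBounded {x | displacement ρ K ⟨1, h1K⟩ x ≤ c} := fun c => by
    obtain ⟨S, hS⟩ := hproper (c + 1)
    refine isBounded_iff_forall_norm_le.2 ⟨S, fun x hx => ?_⟩
    by_contra! hxS
    have hxc : displacement ρ K ⟨1, h1K⟩ x ≤ c := hx
    linarith [hS x hxS.le]
  have hM : {x | displacement ρ K ⟨1, h1K⟩ x = m} = {x | displacement ρ K ⟨1, h1K⟩ x ≤ m} :=
    Set.ext fun x => ⟨le_of_eq, fun h => le_antisymm h (hm ▸ ciInf_le hbelow x)⟩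
  obtain ⟨p, hp⟩ := hconv.exists_apply_eq_iInf hcont hbelow hsub
  rw [hM]
  exact ⟨⟨p, (hp.trans hm.symm).le⟩, isClosed_le hcont continuous_const,
    by simpa only [mem_univ, true_and] using hconv.convex_le m, hsub m⟩

/-- `G` acts on a uniformly convex Banach space `X` by affine isometries,
`K` is a finite symmetric generating set containing `1`, `d_K(x) = max_{k∈K} ‖k·x − x‖`
is proper. Then the set `M` of points attaining `m = inf d_K` is nonempty, closed,
convex and bounded. -/
theorem stmt2
    {X : Type*} [NormedAddCommGroup X] [NormedSpace ℝ X]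
    [UniformConvexSpace X] [CompleteSpace X]
    {G : Type*} [Group G] (ρ : G → X → X)
    (hone : ∀ x, ρ 1 x = x)
    (hmul : ∀ g h x, ρ (g * h) x = ρ g (ρ h x))
    (hiso : ∀ g x y, ‖ρ g x - ρ g y‖ = ‖x - y‖)
    (haff : ∀ g (t : ℝ) x y, 0 ≤ t → t ≤ 1 →
      ρ g (t • x + (1 - t) • y) = t • ρ g x + (1 - t) • ρ g y)
    (K : Finset G) (h1K : (1 : G) ∈ K)
    (hsymm : ∀ k ∈ K, k⁻¹ ∈ K)
    (hgen : Subgroup.closure (K : Set G) = ⊤)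
    (dK : X → ℝ)
    (hdK : ∀ x, dK x = K.sup' ⟨1, h1K⟩ (fun k => ‖ρ k x - x‖))
    (hproper : ∀ R : ℝ, ∃ S : ℝ, ∀ x : X, S ≤ ‖x‖ → R ≤ dK x)
    (m : ℝ) (hm : m = ⨅ x : X, dK x) :
    {x : X | dK x = m}.Nonempty ∧ IsClosed {x : X | dK x = m} ∧
    Convex ℝ {x : X | dK x = m} ∧ IsBounded {x : X | dK x = m} :=
  stmt2_general ρ hiso haff K h1K dK hdK hproper m hm
end

section
/- Let X be a uniformly convex Banach space and M ⊆ X a nonempty bounded closed convex set that is invariant under an isometry g of X. Then the circumcenter (Chebyshev center) of M is fixed by g. -/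
open Bornology

theorem Isometry.iSup_dist_apply_eq {α : Type*} [PseudoMetricSpace α] {g : α → α}
    (hg : Isometry g) {M : Set α} (hgM : g '' M = M) (a : α) :
    ⨆ y : M, dist (g a) y = ⨆ y : M, dist a y := by
  calc ⨆ y : M, dist (g a) y
      = ⨆ y : g '' M, dist (g a) y := by rw [hgM]
    _ = ⨆ x : M, dist (g a) (g x) :=
        (Set.imageFactorization_surjective.iSup_comp fun y : g '' M ↦ dist (g a) y).symm
    _ = ⨆ y : M, dist a y := by simp only [hg.dist_eq]

theorem stmt3_general
    {X : Type*} [NormedAddCommGroup X]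
    (M : Set X)
    (g : X → X) (hg : Isometry g) (hgbij : Function.Bijective g)
    (hgM : g '' M = M)
    (c : X)
    (hmin : ∀ x : X, (⨆ y : M, ‖c - (y : X)‖) ≤ ⨆ y : M, ‖x - (y : X)‖)
    (huniq : ∀ c' : X,
      (∀ x : X, (⨆ y : M, ‖c' - (y : X)‖) ≤ ⨆ y : M, ‖x - (y : X)‖) → c' = c) :
    g c = c := by
  refine huniq (g c) fun x ↦ ?_
  obtain ⟨z, rfl⟩ := hgbij.surjective x
  simpa only [← dist_eq_norm, hg.iSup_dist_apply_eq hgM] using hmin z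

/-- In a uniformly convex Banach space, the circumcenter (Chebyshev
center) `c` of a nonempty bounded closed convex set `M` — the unique minimizer of
`x ↦ sup_{y ∈ M} ‖x − y‖` — is fixed by any bijective isometry `g` preserving `M`. -/
theorem stmt3
    {X : Type*} [NormedAddCommGroup X] [NormedSpace ℝ X]
    [UniformConvexSpace X] [CompleteSpace X]
    (M : Set X) (hMne : M.Nonempty) (hMbd : IsBounded M)
    (hMcl : IsClosed M) (hMcv : Convex ℝ M)
    (g : X → X) (hg : Isometry g) (hgbij : Function.Bijective g)
    (hgM : g '' M = M)
    (c : X)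
    (hmin : ∀ x : X, (⨆ y : M, ‖c - (y : X)‖) ≤ ⨆ y : M, ‖x - (y : X)‖)
    (huniq : ∀ c' : X,
      (∀ x : X, (⨆ y : M, ‖c' - (y : X)‖) ≤ ⨆ y : M, ‖x - (y : X)‖) → c' = c) :
    g c = c :=
  stmt3_general M g hg hgbij hgM c hmin huniq
end

section
/- Let X be a strictly convex normed space and f, g : X → ℝ convex functions with g strictly convex. If the sum f + g attains its minimum, it does so at a unique point. In particular, in a Hilbert space, for a finite family of affine isometries (T_i) with linear parts having no common nonzero fixed vector, E(x) = Σ_i ‖T_i x − x‖² has at most one minimizer. -/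
/-!
A strictly convex function has at most one minimizer: two distinct minimizers would give a
strictly smaller value at their midpoint. For the Hilbert-space energy, each term
`x ↦ ‖T i x - x‖²` is the squared norm of an affine map, and along a segment the parallelogram
law makes it fall below its chord by `t (1 - t) ‖(L i - 1) (x - y)‖²`. Summing over `i`, this
defect is positive as soon as `x ≠ y`, because the linear parts have no common fixed vector.
-/

open Finset

section SquaredNorm

variable {E F : Type*} [AddCommGroup E] [Module ℝ E]
  [NormedAddCommGroup F] [InnerProductSpace ℝ F]

theorem norm_smul_add_smul_sq_of_add_eq_one (x y : F) {a b : ℝ} (hab : a + b = 1) :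
    ‖a • x + b • y‖ ^ 2 = a * ‖x‖ ^ 2 + b * ‖y‖ ^ 2 - a * b * ‖x - y‖ ^ 2 := by
  rw [norm_add_sq_real, norm_sub_sq_real, norm_smul, norm_smul, real_inner_smul_left,
    real_inner_smul_right, Real.norm_eq_abs, Real.norm_eq_abs, mul_pow, mul_pow, sq_abs, sq_abs]
  obtain rfl : b = 1 - a := by linarith
  ring

theorem AffineMap.norm_apply_combo_sq (D : E →ᵃ[ℝ] F) (x y : E) {a b : ℝ} (hab : a + b = 1) :
    ‖D (a • x + b • y)‖ ^ 2
      = a * ‖D x‖ ^ 2 + b * ‖D y‖ ^ 2 - a * b * ‖D.linear (x - y)‖ ^ 2 := by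
  rw [Convex.combo_affine_apply hab, norm_smul_add_smul_sq_of_add_eq_one _ _ hab,
    ← vsub_eq_sub x y, D.linearMap_vsub, vsub_eq_sub]

theorem strictConvexOn_sum_norm_sq_affineMap {ι : Type*} (s : Finset ι) (D : ι → E →ᵃ[ℝ] F)
    (hker : ∀ v : E, (∀ i ∈ s, (D i).linear v = 0) → v = 0) :
    StrictConvexOn ℝ Set.univ fun x => ∑ i ∈ s, ‖D i x‖ ^ 2 := by
  refine ⟨convex_univ, fun x _ y _ hxy a b ha hb hab => ?_⟩
  obtain ⟨i, hi, hDi⟩ : ∃ i ∈ s, (D i).linear (x - y) ≠ 0 := by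
    by_contra! h
    exact hxy (sub_eq_zero.mp (hker _ h))
  have hdefect : 0 < ∑ i ∈ s, ‖(D i).linear (x - y)‖ ^ 2 :=
    sum_pos' (fun _ _ => by positivity) ⟨i, hi, by positivity⟩
  simp only [smul_eq_mul, (D _).norm_apply_combo_sq x y hab, sum_sub_distrib, sum_add_distrib,
    ← mul_sum]
  linarith [mul_pos (mul_pos ha hb) hdefect]

end SquaredNorm

/-- (a) If `f, g : X → ℝ` are convex with `g` strictly convex and
`f + g` attains its minimum, the minimizer is unique. (b) In a real Hilbert space,
for a finite family of affine isometries `T i x = L i x + b i` whose linear parts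
have no common nonzero fixed vector, `E(x) = Σ ‖T_i x − x‖²` has at most one
minimizer. -/
theorem stmt9 :
    (∀ (X : Type) [NormedAddCommGroup X] [NormedSpace ℝ X] [StrictConvexSpace ℝ X]
      (f g : X → ℝ), ConvexOn ℝ Set.univ f → StrictConvexOn ℝ Set.univ g →
      (∃ p : X, ∀ x : X, f p + g p ≤ f x + g x) →
      (∃! p : X, ∀ x : X, f p + g p ≤ f x + g x)) ∧
    (∀ (H : Type) [NormedAddCommGroup H] [InnerProductSpace ℝ H] [CompleteSpace H]
      (ι : Type) (Ω : Finset ι) (T : ι → H → H) (L : ι → H →ₗᵢ[ℝ] H) (b : ι → H),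
      (∀ i x, T i x = L i x + b i) →
      (∀ v : H, (∀ i ∈ Ω, L i v = v) → v = 0) →
      ∀ p₁ p₂ : H,
        (∀ x : H, (∑ i ∈ Ω, ‖T i p₁ - p₁‖ ^ 2) ≤ ∑ i ∈ Ω, ‖T i x - x‖ ^ 2) →
        (∀ x : H, (∑ i ∈ Ω, ‖T i p₂ - p₂‖ ^ 2) ≤ ∑ i ∈ Ω, ‖T i x - x‖ ^ 2) →
        p₁ = p₂) := by
  constructor
  · intro X _ _ _ f g hf hg ⟨p, hp⟩
    exact ⟨p, hp, fun q hq => (hf.add_strictConvexOn hg).eq_of_isMinOn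
      (isMinOn_univ_iff.mpr hq) (isMinOn_univ_iff.mpr hp) (Set.mem_univ q) (Set.mem_univ p)⟩
  · intro H _ _ _ ι Ω T L b hT hfix p₁ p₂ h₁ h₂
    let D : ι → H →ᵃ[ℝ] H := fun i =>
      ⟨fun x => T i x - x, (L i).toLinearMap - LinearMap.id, fun x v => by
        simp only [vadd_eq_add, hT, map_add, LinearMap.sub_apply, LinearMap.id_apply,
          LinearIsometry.coe_toLinearMap]
        abel⟩
    have hE : StrictConvexOn ℝ Set.univ fun x => ∑ i ∈ Ω, ‖T i x - x‖ ^ 2 :=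
      strictConvexOn_sum_norm_sq_affineMap Ω D fun v hv =>
        hfix v fun i hi => sub_eq_zero.mp (hv i hi)
    exact hE.eq_of_isMinOn (isMinOn_univ_iff.mpr h₁) (isMinOn_univ_iff.mpr h₂)
      (Set.mem_univ p₁) (Set.mem_univ p₂)
end

section
/- Let X be a uniformly convex Banach space and G a group acting on X by affine isometries such that some (equivalently, every) orbit is bounded. Then G has a global fixed point, namely the circumcenter of any orbit. -/
/-!
The orbit `S` of `x₀` is a nonempty bounded set that every `g` maps onto itself isometrically,
so `g` preserves the farthest-point distance `c ↦ sup_{y ∈ S} ‖c - y‖`. Uniform convexity makes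
this function strictly smaller at the midpoint of two far-apart almost-minimizers, so minimizing
sequences are Cauchy and the minimizer (the circumcenter of `S`) exists and is unique; being
unique, it is fixed by every `g`.
-/

open Bornology Filter Metric Set Topology

section PseudoMetricSpace

variable {α : Type*} [PseudoMetricSpace α] {S : Set α}

noncomputable def farthestDist (S : Set α) (c : α) : ℝ := ⨆ y : S, dist c y

noncomputable def circumradius (S : Set α) : ℝ := ⨅ c, farthestDist S c

theorem farthestDist_nonneg (c : α) : 0 ≤ farthestDist S c :=
  Real.iSup_nonneg fun _ => dist_nonneg

theorem circumradius_nonneg : 0 ≤ circumradius S :=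
  Real.iInf_nonneg farthestDist_nonneg

theorem circumradius_le_farthestDist (c : α) : circumradius S ≤ farthestDist S c :=
  ciInf_le ⟨0, by rintro _ ⟨c, rfl⟩; exact farthestDist_nonneg c⟩ c

theorem dist_le_farthestDist (hS : IsBounded S) {c y : α} (hy : y ∈ S) :
    dist c y ≤ farthestDist S c := by
  obtain ⟨R, hR⟩ := hS.subset_closedBall c
  exact le_ciSup (f := fun y : S => dist c y)
    ⟨R, by rintro _ ⟨z, rfl⟩; exact mem_closedBall'.1 (hR z.2)⟩ ⟨y, hy⟩

theorem farthestDist_le (hne : S.Nonempty) {c : α} {M : ℝ} (h : ∀ y ∈ S, dist c y ≤ M) :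
    farthestDist S c ≤ M :=
  have := hne.to_subtype
  ciSup_le fun y => h y y.2

theorem lipschitzWith_farthestDist (hS : IsBounded S) (hne : S.Nonempty) :
    LipschitzWith 1 (farthestDist S) :=
  LipschitzWith.of_le_add fun c c' => farthestDist_le hne fun y hy =>
    calc dist c y ≤ dist c c' + dist c' y := dist_triangle c c' y
      _ ≤ dist c c' + farthestDist S c' := by gcongr; exact dist_le_farthestDist hS hy
      _ = farthestDist S c' + dist c c' := add_comm _ _

theorem farthestDist_apply_le_of_subset_image (hS : IsBounded S) (hne : S.Nonempty)
    {T : α → α} (hT : Isometry T) (hST : S ⊆ T '' S) (c : α) :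
    farthestDist S (T c) ≤ farthestDist S c :=
  farthestDist_le hne fun _ hy => by
    obtain ⟨z, hz, rfl⟩ := hST hy
    rw [hT.dist_eq]
    exact dist_le_farthestDist hS hz

end PseudoMetricSpace

section UniformConvexSpace

variable {E : Type*} [NormedAddCommGroup E] [NormedSpace ℝ E]

theorem exists_norm_le_norm_sub_le {w : E} {r η : ℝ} (hr : 0 ≤ r) (hη : 0 < η)
    (hw : ‖w‖ ≤ r + η) : ∃ w', ‖w'‖ ≤ r ∧ ‖w - w'‖ ≤ η := by
  have hrη : 0 < r + η := by positivity
  refine ⟨(r / (r + η)) • w, ?_, ?_⟩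
  · rw [norm_smul_of_nonneg (by positivity), div_mul_eq_mul_div, div_le_iff₀ hrη]
    exact mul_le_mul_of_nonneg_left hw hr
  · have : w - (r / (r + η)) • w = (η / (r + η)) • w := by
      rw [show η / (r + η) = 1 - r / (r + η) by field_simp; ring, sub_smul, one_smul]
    rw [this, norm_smul_of_nonneg (by positivity), div_mul_eq_mul_div, div_le_iff₀ hrη]
    exact mul_le_mul_of_nonneg_left hw hη.le

variable [UniformConvexSpace E]

/-- The uniform convexity estimate at radius `r` survives enlarging the ball to radius `r + η`. -/
theorem exists_forall_norm_le_add_norm_add_le_two_mul_sub {ε r : ℝ} (hε : 0 < ε) (hr : 0 ≤ r) :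
    ∃ η > 0, ∀ ⦃u v : E⦄, ‖u‖ ≤ r + η → ‖v‖ ≤ r + η → ε ≤ ‖u - v‖ → ‖u + v‖ ≤ 2 * r - η := by
  obtain ⟨δ, hδ, huv⟩ := exists_forall_closed_ball_dist_add_le_two_mul_sub E (half_pos hε) r
  set η := min (ε / 4) (δ / 4)
  have hη : 0 < η := by positivity
  refine ⟨η, hη, fun u v hu hv hεuv => ?_⟩
  obtain ⟨u', hu', huu'⟩ := exists_norm_le_norm_sub_le hr hη hu
  obtain ⟨v', hv', hvv'⟩ := exists_norm_le_norm_sub_le hr hη hv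
  have hηε : η ≤ ε / 4 := min_le_left _ _
  have hηδ : η ≤ δ / 4 := min_le_right _ _
  have hε' : ε / 2 ≤ ‖u' - v'‖ := by
    have := dist_triangle4 u u' v' v
    rw [dist_eq_norm, dist_eq_norm, dist_eq_norm, dist_eq_norm, norm_sub_rev v'] at this
    linarith
  calc ‖u + v‖ = ‖(u' + v') + (u - u') + (v - v')‖ := by congr 1; abel
    _ ≤ ‖u' + v'‖ + ‖u - u'‖ + ‖v - v'‖ := norm_add₃_le
    _ ≤ 2 * r - δ + η + η := by gcongr; exact huv hu' hv' hε'
    _ ≤ 2 * r - η := by linarith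

variable {S : Set E}

/-- Almost-minimizers of the farthest-point distance are close to each other: otherwise their
midpoint would do strictly better than the circumradius. -/
theorem exists_forall_farthestDist_le_norm_sub_lt (hS : IsBounded S) (hne : S.Nonempty)
    {ε : ℝ} (hε : 0 < ε) : ∃ η > 0, ∀ c c' : E, farthestDist S c ≤ circumradius S + η →
      farthestDist S c' ≤ circumradius S + η → ‖c - c'‖ < ε := by
  obtain ⟨η, hη, huv⟩ :=
    exists_forall_norm_le_add_norm_add_le_two_mul_sub (E := E) hε (circumradius_nonneg (S := S))
  refine ⟨η, hη, fun c c' hc hc' => ?_⟩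
  by_contra! hcc'
  have hmid : farthestDist S ((2⁻¹ : ℝ) • (c + c')) ≤ circumradius S - η / 2 := by
    refine farthestDist_le hne fun y hy => ?_
    have hcy : ‖c - y‖ ≤ circumradius S + η := by
      rw [← dist_eq_norm]; exact (dist_le_farthestDist hS hy).trans hc
    have hc'y : ‖c' - y‖ ≤ circumradius S + η := by
      rw [← dist_eq_norm]; exact (dist_le_farthestDist hS hy).trans hc'
    have hsum := huv hcy hc'y (by rwa [sub_sub_sub_cancel_right])
    have : (2⁻¹ : ℝ) • (c + c') - y = (2⁻¹ : ℝ) • ((c - y) + (c' - y)) := by module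
    rw [dist_eq_norm, this, norm_smul_of_nonneg (by norm_num)]
    linarith
  linarith [circumradius_le_farthestDist (S := S) ((2⁻¹ : ℝ) • (c + c'))]

theorem eq_of_farthestDist_eq_circumradius (hS : IsBounded S) (hne : S.Nonempty) {c c' : E}
    (hc : farthestDist S c = circumradius S) (hc' : farthestDist S c' = circumradius S) :
    c = c' := by
  by_contra hne'
  obtain ⟨η, hη, hclose⟩ :=
    exists_forall_farthestDist_le_norm_sub_lt hS hne (norm_sub_pos_iff.2 hne')
  exact lt_irrefl _ (hclose c c' (by linarith) (by linarith))

theorem exists_farthestDist_eq_circumradius [CompleteSpace E] (hS : IsBounded S)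
    (hne : S.Nonempty) : ∃ p : E, farthestDist S p = circumradius S := by
  obtain ⟨u, -, hu, hu_mem⟩ := exists_seq_tendsto_sInf (range_nonempty (farthestDist S))
    ⟨0, by rintro _ ⟨c, rfl⟩; exact farthestDist_nonneg c⟩
  choose c hc using hu_mem
  have hlim : Tendsto (farthestDist S ∘ c) atTop (𝓝 (circumradius S)) := by
    rwa [show farthestDist S ∘ c = u from funext hc]
  have hcauchy : CauchySeq c := by
    refine Metric.cauchySeq_iff'.2 fun ε hε => ?_
    obtain ⟨η, hη, hclose⟩ := exists_forall_farthestDist_le_norm_sub_lt hS hne hε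
    obtain ⟨N, hN⟩ := eventually_atTop.1 (hlim.eventually (ge_mem_nhds (lt_add_of_pos_right _ hη)))
    exact ⟨N, fun n hn => by rw [dist_eq_norm]; exact hclose _ _ (hN n hn) (hN N le_rfl)⟩
  obtain ⟨p, hp⟩ := cauchySeq_tendsto_of_complete hcauchy
  exact ⟨p, tendsto_nhds_unique
    (((lipschitzWith_farthestDist hS hne).continuous.tendsto p).comp hp) hlim⟩

theorem apply_eq_self_of_farthestDist_eq_circumradius (hS : IsBounded S)
    (hne : S.Nonempty) {p : E} (hp : farthestDist S p = circumradius S) {T : E → E}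
    (hT : Isometry T) (hST : S ⊆ T '' S) : T p = p :=
  eq_of_farthestDist_eq_circumradius hS hne
    (le_antisymm ((farthestDist_apply_le_of_subset_image hS hne hT hST p).trans hp.le)
      (circumradius_le_farthestDist _)) hp

end UniformConvexSpace

theorem stmt11_general
    {X : Type*} [NormedAddCommGroup X] [NormedSpace ℝ X]
    [UniformConvexSpace X] [CompleteSpace X]
    {G : Type*} [Group G] (ρ : G → X → X)
    (hmul : ∀ g h x, ρ (g * h) x = ρ g (ρ h x))
    (hiso : ∀ g x y, ‖ρ g x - ρ g y‖ = ‖x - y‖)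
    (x₀ : X) (horb : IsBounded {y : X | ∃ g : G, y = ρ g x₀}) :
    ∃ p : X, ∀ g : G, ρ g p = p := by
  set S := {y : X | ∃ g : G, y = ρ g x₀}
  have hne : S.Nonempty := ⟨ρ 1 x₀, 1, rfl⟩
  obtain ⟨p, hp⟩ := exists_farthestDist_eq_circumradius horb hne
  refine ⟨p, fun g => apply_eq_self_of_farthestDist_eq_circumradius horb hne hp
    (Isometry.of_dist_eq fun x y => by simp only [dist_eq_norm, hiso]) ?_⟩
  rintro _ ⟨h, rfl⟩
  exact ⟨ρ (g⁻¹ * h) x₀, ⟨g⁻¹ * h, rfl⟩, by rw [← hmul, mul_inv_cancel_left]⟩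

/-- A group acting by affine isometries on a uniformly convex Banach
space with a bounded orbit has a global fixed point. -/
theorem stmt11
    {X : Type*} [NormedAddCommGroup X] [NormedSpace ℝ X]
    [UniformConvexSpace X] [CompleteSpace X]
    {G : Type*} [Group G] (ρ : G → X → X)
    (hone : ∀ x, ρ 1 x = x)
    (hmul : ∀ g h x, ρ (g * h) x = ρ g (ρ h x))
    (hiso : ∀ g x y, ‖ρ g x - ρ g y‖ = ‖x - y‖)
    (haff : ∀ g (t : ℝ) x y, 0 ≤ t → t ≤ 1 →
      ρ g (t • x + (1 - t) • y) = t • ρ g x + (1 - t) • ρ g y)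
    (x₀ : X) (horb : IsBounded {y : X | ∃ g : G, y = ρ g x₀}) :
    ∃ p : X, ∀ g : G, ρ g p = p :=
  stmt11_general ρ hmul hiso x₀ horb
end

section
/- Let U be a linear isometry of L^p(μ) (p ≠ 2, 1 ≤ p < ∞, μ σ-finite) of Banach–Lamperti form U(f)(x) = f(Tx)·w(x)·h(x), where T is a measure-class-preserving transformation, w = (d(T_*μ)/dμ)^{1/p} ≥ 0, and |h| = 1 a.e. Then the Mazur map M_{p,2} intertwines U with the linear isometry V of L^2(μ) given by V(f)(x) = f(Tx)·w(x)^{p/2}·h(x): that is, M_{p,2} ∘ U = V ∘ M_{p,2}. -/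
/-- The Mazur map `M_{p,2}` of the paper is `signedRpow (p / 2)` applied pointwise. -/
noncomputable def signedRpow (r a : ℝ) : ℝ := Real.sign a * |a| ^ r

theorem Real.sign_mul (a b : ℝ) : Real.sign (a * b) = Real.sign a * Real.sign b := by
  rcases lt_trichotomy a 0 with ha | rfl | ha <;> rcases lt_trichotomy b 0 with hb | rfl | hb <;>
    simp [Real.sign_of_pos, Real.sign_of_neg, mul_pos_of_neg_of_neg, mul_neg_of_neg_of_pos,
      mul_neg_of_pos_of_neg, *]

theorem signedRpow_mul (r a b : ℝ) :
    signedRpow r (a * b) = signedRpow r a * signedRpow r b := by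
  simp only [signedRpow, Real.sign_mul, abs_mul, Real.mul_rpow (abs_nonneg a) (abs_nonneg b)]
  ring

theorem signedRpow_of_nonneg {r c : ℝ} (hr : r ≠ 0) (hc : 0 ≤ c) : signedRpow r c = c ^ r := by
  rcases hc.eq_or_lt with rfl | hc
  · simp [signedRpow, Real.zero_rpow hr]
  · simp [signedRpow, Real.sign_of_pos hc, abs_of_pos hc]

theorem signedRpow_of_eq_one_or_eq_neg_one {r ε : ℝ} (hε : ε = 1 ∨ ε = -1) :
    signedRpow r ε = ε := by
  rcases hε with rfl | rfl <;> simp [signedRpow, Real.sign_of_pos, Real.sign_of_neg]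

open MeasureTheory

theorem stmt13_general
    {α : Type*}
    (p : ℝ) (hp1 : 1 ≤ p)
    (T : α → α)
    (w h : α → ℝ) (hw : ∀ x, 0 ≤ w x)
    (hh : ∀ x, h x = 1 ∨ h x = -1)
    (U V M : (α → ℝ) → (α → ℝ))
    (hU : ∀ f x, U f x = f (T x) * w x * h x)
    (hV : ∀ f x, V f x = f (T x) * (w x) ^ (p / 2) * h x)
    (hM : ∀ f x, M f x = Real.sign (f x) * |f x| ^ (p / 2)) :
    ∀ f : α → ℝ, ∀ x : α, M (U f) x = V (M f) x := by
  intro f x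
  have hr : p / 2 ≠ 0 := by positivity
  calc M (U f) x = signedRpow (p / 2) (f (T x) * w x * h x) := by rw [hM, hU, signedRpow]
    _ = signedRpow (p / 2) (f (T x)) * w x ^ (p / 2) * h x := by
      rw [signedRpow_mul, signedRpow_mul, signedRpow_of_nonneg hr (hw x),
        signedRpow_of_eq_one_or_eq_neg_one (hh x)]
    _ = V (M f) x := by rw [hV, hM, signedRpow]

/-- If `U f x = f (T x) · w x · h x` is a Banach–Lamperti isometry of
`L^p(μ)` (`w = (d T_*μ/dμ)^{1/p} ≥ 0`, `|h| = 1` a.e., here everywhere and real-valued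
so `h = ±1`), then the Mazur map `M_{p,2}(f) = sign(f)·|f|^{p/2}` intertwines `U` with
`V f x = f (T x) · (w x)^{p/2} · h x`: `M_{p,2} ∘ U = V ∘ M_{p,2}`. -/
theorem stmt13
    {α : Type*} [MeasurableSpace α] (μ : Measure α) [SigmaFinite μ]
    (p : ℝ) (hp1 : 1 ≤ p) (hp2 : p ≠ 2)
    (T : α → α) (hT : Measurable T)
    (w h : α → ℝ) (hw : ∀ x, 0 ≤ w x)
    (hpush : ∀ x, w x = ((Measure.map T μ).rnDeriv μ x).toReal ^ (1 / p))
    (hh : ∀ x, h x = 1 ∨ h x = -1)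
    (U V M : (α → ℝ) → (α → ℝ))
    (hU : ∀ f x, U f x = f (T x) * w x * h x)
    (hV : ∀ f x, V f x = f (T x) * (w x) ^ (p / 2) * h x)
    (hM : ∀ f x, M f x = Real.sign (f x) * |f x| ^ (p / 2)) :
    ∀ f : α → ℝ, ∀ x : α, M (U f) x = V (M f) x :=
  stmt13_general p hp1 T w h hw hh U V M hU hV hM
end
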